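/- Let Φ be the linear functional on ℚ(q)[z] with Φ([n,z choose n]_q) = 1/(-q^2;q)_n. Then Φ(z^n) = ε_n for all n ≥ 0, where ε_n are the Carlitz q-Euler numbers defined by ε_0 = 1 and Σ_{k=0}^n C(n,k) q^{k+1} ε_k + ε_n = 0 for n ≥ 1. -/

import Mathlib

open Finset Polynomial

noncomputable def q : RatFunc ℚ := RatFunc.X

/-- q-integer `[k]_q = (1-q^k)/(1-q)` for `k : ℤ`. -/
noncomputable def qint (k : ℤ) : RatFunc ℚ := (1 - q ^ k) / (1 - q)

/-- q-factorial `[n]_q!`. -/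
noncomputable def qfact (n : ℕ) : RatFunc ℚ := ∏ m ∈ Finset.range n, qint (m + 1)

/-- q-Pochhammer `(A;Q)_n`. -/
noncomputable def qPoch (Q A : RatFunc ℚ) (n : ℕ) : RatFunc ℚ :=
  ∏ j ∈ Finset.range n, (1 - A * Q ^ j)

/-- The generalized q-binomial polynomial `[m, z choose n]_q`. -/
noncomputable def qbinomPoly (m n : ℕ) : Polynomial (RatFunc ℚ) :=
  Polynomial.C (qfact n)⁻¹ *
    ∏ k ∈ Finset.Icc ((m : ℤ) - n + 1) (m : ℤ),
      (Polynomial.C (qint k) + Polynomial.C (q ^ k) * Polynomial.X)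

/-!
The recurrence for `ε` is read off from the operator `T p = q (1 + q z) p(q z + 1) + z p`, because
`T (z ^ (n - 1)) = ∑ₖ C(n, k) q ^ (k + 1) z ^ k + z ^ n`. So it suffices that `Φ ∘ T = 0`, and this
can be checked on the basis `P m = [m]_q! [m, z choose m]_q = ∏_{k=1}^m ([k]_q + q ^ k z)`.
As `([k]_q + q ^ k z)(q z + 1) = [k+1]_q + q ^ (k + 1) z`, we get `T (P m) = q P (m+1) + z P m`, and
`q ^ (m + 1) z P m = P (m+1) - [m+1]_q P m`. Hence `q ^ (m + 1) Φ (T (P m))` equals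
`(1 + q ^ (m + 2)) Φ (P (m+1)) - [m+1]_q Φ (P m)`, which vanishes for `Φ (P m) = [m]_q! / (-q²;q)_m`.
Finally the coefficient `1 + q ^ (n + 1)` of `ε n` in its recurrence is nonzero, so the recurrence
and `ε 0` determine `ε`.
-/

section Recurrence

variable {R : Type*} [CommRing R]

def QEulerRec (c : R) (a : ℕ → R) : Prop :=
  ∀ n : ℕ, 1 ≤ n → (∑ k ∈ range (n + 1), (n.choose k : R) * c ^ (k + 1) * a k) + a n = 0

theorem QEulerRec.unique [IsDomain R] {c : R} (hc : ∀ n : ℕ, 1 ≤ n → 1 + c ^ (n + 1) ≠ 0)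
    {a b : ℕ → R} (ha : QEulerRec c a) (hb : QEulerRec c b) (h0 : a 0 = b 0) : a = b := by
  funext n
  induction n using Nat.strong_induction_on with
  | _ n ih =>
    rcases Nat.eq_zero_or_pos n with rfl | hn
    · exact h0
    have hlow : ∑ k ∈ range n, (n.choose k : R) * c ^ (k + 1) * a k =
        ∑ k ∈ range n, (n.choose k : R) * c ^ (k + 1) * b k :=
      sum_congr rfl fun k hk => by rw [ih k (mem_range.mp hk)]
    have hab : (1 + c ^ (n + 1)) * (a n - b n) = 0 := by
      have ha' := ha n hn
      have hb' := hb n hn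
      rw [sum_range_succ, Nat.choose_self, Nat.cast_one, one_mul] at ha' hb'
      linear_combination ha' - hb' - hlow
    exact sub_eq_zero.mp ((mul_eq_zero.mp hab).resolve_left (hc n hn))

noncomputable def qEulerOp (c : R) : R[X] →ₗ[R] R[X] :=
  LinearMap.mulLeft R (C c * (1 + C c * X)) ∘ₗ (aeval (C c * X + 1)).toLinearMap +
    LinearMap.mulLeft R X

theorem qEulerOp_apply (c : R) (p : R[X]) :
    qEulerOp c p = C c * (1 + C c * X) * p.comp (C c * X + 1) + X * p := by
  simp [qEulerOp, comp_eq_aeval, mul_assoc]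

theorem qEulerOp_X_pow (c : R) (n : ℕ) :
    qEulerOp c (X ^ n) =
      ∑ k ∈ range (n + 2), ((n + 1).choose k * c ^ (k + 1) : R) • X ^ k + X ^ (n + 1) := by
  have hpow : C c * (1 + C c * X) * (C c * X + 1) ^ n = C c * (C c * X + 1) ^ (n + 1) := by
    ring
  rw [qEulerOp_apply, X_pow_comp, hpow, add_pow, mul_sum, ← pow_succ']
  congr 1
  refine sum_congr rfl fun k _ => ?_
  rw [smul_eq_C_mul, mul_pow, one_pow, mul_one, ← C_pow, ← C_eq_natCast, pow_succ]
  simp only [map_mul]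
  ring

theorem qEulerRec_of_comp_qEulerOp_eq_zero {c : R} (φ : R[X] →ₗ[R] R)
    (hφ : φ ∘ₗ qEulerOp c = 0) : QEulerRec c fun n => φ (X ^ n) := by
  rintro n hn
  obtain ⟨m, rfl⟩ : ∃ m, n = m + 1 := ⟨n - 1, by omega⟩
  simpa [qEulerOp_X_pow, map_sum, map_smul] using LinearMap.congr_fun hφ (X ^ m)

end Recurrence

theorem q_ne_zero : q ≠ 0 := RatFunc.X_ne_zero

theorem q_pow_add_one_ne_zero {j : ℕ} (hj : j ≠ 0) : q ^ j + 1 ≠ 0 := by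
  simpa [q, ← RatFunc.algebraMap_X] using
    RatFunc.algebraMap_ne_zero (X_pow_add_C_ne_zero (Nat.pos_of_ne_zero hj) (1 : ℚ))

theorem q_pow_sub_one_ne_zero {j : ℕ} (hj : j ≠ 0) : q ^ j - 1 ≠ 0 := by
  simpa [q, ← RatFunc.algebraMap_X] using
    RatFunc.algebraMap_ne_zero (X_pow_sub_C_ne_zero (Nat.pos_of_ne_zero hj) (1 : ℚ))

theorem one_sub_q_pow_ne_zero {j : ℕ} (hj : j ≠ 0) : 1 - q ^ j ≠ 0 :=
  sub_ne_zero.mpr (sub_ne_zero.mp (q_pow_sub_one_ne_zero hj)).symm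

theorem qint_natCast (k : ℕ) : qint k = (1 - q ^ k) / (1 - q) := by
  simp [qint]

theorem qint_one : qint 1 = 1 := by
  simpa [qint] using div_self (one_sub_q_pow_ne_zero one_ne_zero)

theorem qint_succ_ne_zero (k : ℕ) : qint ((k + 1 : ℕ) : ℤ) ≠ 0 := by
  rw [qint_natCast]
  exact div_ne_zero (one_sub_q_pow_ne_zero k.succ_ne_zero)
    (by simpa using one_sub_q_pow_ne_zero one_ne_zero)

theorem qint_add_q_pow (k : ℕ) : qint k + q ^ k = qint ((k + 1 : ℕ) : ℤ) := by
  have h1 : 1 - q ≠ 0 := by simpa using one_sub_q_pow_ne_zero one_ne_zero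
  rw [qint_natCast, qint_natCast]
  field_simp
  ring

theorem qfact_ne_zero (n : ℕ) : qfact n ≠ 0 :=
  prod_ne_zero_iff.mpr fun m _ => by exact_mod_cast qint_succ_ne_zero m

theorem qPoch_succ (n : ℕ) :
    qPoch q (-q ^ 2) (n + 1) = qPoch q (-q ^ 2) n * (q ^ (n + 2) + 1) := by
  rw [qPoch, qPoch, prod_range_succ]
  ring

theorem qPoch_ne_zero (n : ℕ) : qPoch q (-q ^ 2) n ≠ 0 := by
  induction n with
  | zero => simp [qPoch]
  | succ n ih => rw [qPoch_succ]; exact mul_ne_zero ih (q_pow_add_one_ne_zero (by omega))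

noncomputable def qbinomFactor (k : ℕ) : Polynomial (RatFunc ℚ) := C (qint k) + C (q ^ k) * X

theorem qbinomFactor_one : qbinomFactor 1 = 1 + C q * X := by
  simp [qbinomFactor, qint_one]

theorem qbinomFactor_comp (k : ℕ) :
    (qbinomFactor k).comp (C q * X + 1) = qbinomFactor (k + 1) := by
  simp only [qbinomFactor, add_comp, mul_comp, C_comp, X_comp, ← qint_add_q_pow, pow_succ,
    map_add, map_mul]
  ring

theorem degree_qbinomFactor (k : ℕ) : (qbinomFactor k).degree = 1 := by
  rw [qbinomFactor, add_comm]
  exact degree_linear (pow_ne_zero k q_ne_zero)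

noncomputable def qbinomProd (n : ℕ) : Polynomial (RatFunc ℚ) :=
  ∏ i ∈ range n, qbinomFactor (i + 1)

theorem qbinomPoly_self (n : ℕ) : qbinomPoly n n = C (qfact n)⁻¹ * qbinomProd n := by
  rw [qbinomPoly, qbinomProd, sub_self, zero_add]
  congr 1
  refine prod_nbij' (fun k => k.toNat - 1) (fun i => ((i + 1 : ℕ) : ℤ)) ?_ ?_ ?_ ?_ ?_ <;>
    intro k hk
  all_goals simp only [mem_Icc, mem_range] at hk
  · simp only [mem_range]; omega
  · simp only [mem_Icc]; omega
  · omega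
  · omega
  · have hk' : ((k.toNat - 1 + 1 : ℕ) : ℤ) = k := by omega
    rw [qbinomFactor, ← zpow_natCast, hk']

theorem qbinomProd_succ (n : ℕ) : qbinomProd (n + 1) = qbinomProd n * qbinomFactor (n + 1) :=
  prod_range_succ _ n

theorem one_add_C_q_mul_X_mul_qbinomProd_comp (n : ℕ) :
    (1 + C q * X) * (qbinomProd n).comp (C q * X + 1) = qbinomProd (n + 1) := by
  rw [qbinomProd, qbinomProd, Polynomial.prod_comp, prod_range_succ', ← qbinomFactor_one,
    mul_comm]
  simp only [qbinomFactor_comp]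

theorem C_q_pow_mul_X_mul_qbinomProd (n : ℕ) :
    C (q ^ (n + 1)) * (X * qbinomProd n) =
      qbinomProd (n + 1) - C (qint (n + 1)) * qbinomProd n := by
  rw [qbinomProd_succ, qbinomFactor]
  push_cast
  ring

theorem degree_qbinomProd (n : ℕ) : (qbinomProd n).degree = n := by
  simp [qbinomProd, degree_prod, degree_qbinomFactor]

theorem span_range_qbinomProd : Submodule.span (RatFunc ℚ) (Set.range qbinomProd) = ⊤ :=
  Sequence.span ⟨qbinomProd, degree_qbinomProd⟩ fun n =>
    isUnit_iff_ne_zero.mpr <| leadingCoeff_ne_zero.mpr <| degree_ne_bot.mp <| by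
      simp [degree_qbinomProd]

section Functional

variable (Φ : Polynomial (RatFunc ℚ) →ₗ[RatFunc ℚ] RatFunc ℚ)

theorem apply_qbinomProd
    (hΦ : ∀ n : ℕ, Φ (qbinomPoly n n) = (qPoch q (-q ^ 2) n)⁻¹) (n : ℕ) :
    Φ (qbinomProd n) = qfact n / qPoch q (-q ^ 2) n := by
  have h : qbinomProd n = qfact n • qbinomPoly n n := by
    rw [qbinomPoly_self, smul_eq_C_mul, ← mul_assoc, ← C_mul,
      mul_inv_cancel₀ (qfact_ne_zero n), C_1, one_mul]
  rw [h, map_smul, hΦ, smul_eq_mul, div_eq_mul_inv]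

theorem q_pow_add_one_mul_apply_qbinomProd_succ
    (hΦ : ∀ n : ℕ, Φ (qbinomPoly n n) = (qPoch q (-q ^ 2) n)⁻¹) (n : ℕ) :
    (q ^ (n + 2) + 1) * Φ (qbinomProd (n + 1)) = qint (n + 1) * Φ (qbinomProd n) := by
  have hP := qPoch_ne_zero n
  have hq := q_pow_add_one_ne_zero (j := n + 2) (by omega)
  rw [apply_qbinomProd Φ hΦ, apply_qbinomProd Φ hΦ, qfact, prod_range_succ, ← qfact,
    qPoch_succ]
  field_simp

theorem comp_qEulerOp_eq_zero
    (hΦ : ∀ n : ℕ, Φ (qbinomPoly n n) = (qPoch q (-q ^ 2) n)⁻¹) :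
    Φ ∘ₗ qEulerOp q = 0 := by
  refine LinearMap.ext_on_range span_range_qbinomProd fun n => ?_
  have hT : q ^ (n + 1) • qEulerOp q (qbinomProd n) =
      (q ^ (n + 2) + 1) • qbinomProd (n + 1) - qint (n + 1) • qbinomProd n := by
    rw [qEulerOp_apply, mul_assoc, one_add_C_q_mul_X_mul_qbinomProd_comp]
    have hX := C_q_pow_mul_X_mul_qbinomProd n
    simp only [smul_eq_C_mul, map_add, map_one, C_pow] at hX ⊢
    linear_combination hX
  have hΦT := congrArg Φ hT
  rw [map_smul, map_sub, map_smul, map_smul, smul_eq_mul, smul_eq_mul, smul_eq_mul,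
    q_pow_add_one_mul_apply_qbinomProd_succ Φ hΦ, sub_self] at hΦT
  exact (mul_eq_zero.mp hΦT).resolve_left (pow_ne_zero _ q_ne_zero)

end Functional

theorem Phi_pow_eq_qEuler (Φ : Polynomial (RatFunc ℚ) →ₗ[RatFunc ℚ] RatFunc ℚ)
    (hΦ : ∀ n : ℕ, Φ (qbinomPoly n n) = (qPoch q (-q ^ 2) n)⁻¹)
    (ε : ℕ → RatFunc ℚ) (hε0 : ε 0 = 1)
    (hεrec : ∀ n : ℕ, 1 ≤ n →
      (∑ k ∈ Finset.range (n + 1), (n.choose k : RatFunc ℚ) * q ^ (k + 1) * ε k) + ε n = 0) :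
    ∀ n : ℕ, Φ (Polynomial.X ^ n) = ε n := by
  have hrec := qEulerRec_of_comp_qEulerOp_eq_zero Φ (comp_qEulerOp_eq_zero Φ hΦ)
  have h0 : Φ (X ^ 0) = ε 0 := by
    simpa [qbinomPoly_self, qbinomProd, qfact, qPoch, hε0] using hΦ 0
  have hc : ∀ n : ℕ, 1 ≤ n → 1 + q ^ (n + 1) ≠ 0 := fun n _ => by
    rw [add_comm]; exact q_pow_add_one_ne_zero n.succ_ne_zero
  exact congrFun (QEulerRec.unique hc hrec hεrec h0)
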